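/- For $k \in \{1,2\}$ and any measure $\nu$ on $\mathbb{R}^d$ with $\nu(\{0\})=0$ and $\int(1\wedge|x|^k)\nu(dx)<\infty$, one has $\mathcal{A}_k(\nu)(B) = \int_0^1 \nu^{(k/2)}(u^{-1}B)\,\frac{2}{\pi}(1-u^2)^{-1/2}\,du$ for every Borel set $B \subseteq \mathbb{R}^d$. In particular, $\mathcal{A}_2$ is an Upsilon transformation with dilation measure $\tau(du) = \frac{2}{\pi}(1-u^2)^{-1/2}1_{(0,1)}(u)\,du$. -/

import Mathlib

open MeasureTheory Real Set ENNReal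

variable {d : ℕ}

/-- The arcsine transformation `𝒜ₖ` of a measure on `ℝᵈ` (for `k = 1, 2`):
`𝒜ₖ(ν)(B) = ∫ ν(dx) ∫₀^{|x|^{k/2}} (2/π)(|x|^k - r²)^{-1/2} 1_B(r x/|x|) dr`. -/
noncomputable def arcsineT (k : ℝ) (ν : Measure (EuclideanSpace ℝ (Fin d))) :
    Measure (EuclideanSpace ℝ (Fin d)) :=
  (ν.restrict {(0 : EuclideanSpace ℝ (Fin d))}ᶜ).bind fun x =>
    Measure.map (fun r : ℝ => (r / ‖x‖) • x)
      ((volume.restrict (Set.Ioo (0 : ℝ) (‖x‖ ^ (k / 2)))).withDensity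
        (fun r => ENNReal.ofReal (2 / Real.pi * (‖x‖ ^ k - r ^ 2) ^ (-(1/2) : ℝ))))

/-- The `(p)`-transformation of a measure on `ℝᵈ`: pushforward under `x ↦ |x|^{p-1} x`. -/
noncomputable def pTrans (p : ℝ) (ν : Measure (EuclideanSpace ℝ (Fin d))) :
    Measure (EuclideanSpace ℝ (Fin d)) :=
  Measure.map (fun x => ‖x‖ ^ (p - 1) • x) (ν.restrict {(0 : EuclideanSpace ℝ (Fin d))}ᶜ)


/-!
For `x ≠ 0` the inner measure of `𝒜ₖ` is, after the substitution `r = ‖x‖^{k/2} u`, the image of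
the arcsine law `τ(du) = (2/π)(1-u²)^{-1/2} du` on `(0,1)` under `u ↦ u • ‖x‖^{k/2-1} x`. Hence
`𝒜ₖ(ν)` is the image of `ν|_{x ≠ 0} ⊗ τ` under `(x, u) ↦ u • ‖x‖^{k/2-1} x`, and evaluating that
product measure by Tonelli in the other order gives `∫ τ(du) ν^{(k/2)}(u⁻¹B)`. Tonelli needs
`ν|_{x ≠ 0}` to be s-finite, which follows from `∫ (1 ∧ ‖x‖^k) dν < ∞` since the integrand is
positive off the origin.
-/

namespace MeasureTheory.Measure

variable {α β γ : Type*} [MeasurableSpace α] [MeasurableSpace β] [MeasurableSpace γ]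

theorem sFinite_of_lintegral_ne_top {μ : Measure α} {f : α → ℝ≥0∞}
    (hf : AEMeasurable f μ) (hf_ne_zero : ∀ᵐ x ∂μ, f x ≠ 0) (hint : ∫⁻ x, f x ∂μ ≠ ∞) :
    SFinite μ :=
  have := isFiniteMeasure_withDensity hint
  sFinite_of_absolutelyContinuous (withDensity_absolutelyContinuous' hf hf_ne_zero)

theorem map_withDensity_comp {e : α → β} (he : Measurable e) (μ : Measure α)
    {f : β → ℝ≥0∞} (hf : Measurable f) :
    (μ.withDensity (f ∘ e)).map e = (μ.map e).withDensity f := by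
  ext s hs
  rw [Measure.map_apply he hs, withDensity_apply _ (he hs), withDensity_apply _ hs,
    setLIntegral_map hs hf he]
  rfl

theorem bind_map_eq_map_prod {μ : Measure α} {ν : Measure β} [SFinite ν]
    {F : α → β → γ} (hF : Measurable (Function.uncurry F)) :
    μ.bind (fun x => ν.map (F x)) = (μ.prod ν).map (Function.uncurry F) := by
  have hFx (x : α) : Measurable (F x) := hF.comp measurable_prodMk_left
  have hkernel : Measurable fun x => ν.map (F x) := by
    refine Measure.measurable_of_measurable_coe _ fun s hs => ?_
    simp_rw [Measure.map_apply (hFx _) hs]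
    exact measurable_measure_prodMk_left (hF hs)
  ext s hs
  rw [Measure.bind_apply hs hkernel.aemeasurable, Measure.map_apply hF hs,
    Measure.prod_apply (hF hs)]
  simp_rw [Measure.map_apply (hFx _) hs]
  rfl

theorem bind_map_apply {μ : Measure α} {ν : Measure β} [SFinite μ] [SFinite ν]
    {F : α → β → γ} (hF : Measurable (Function.uncurry F)) {s : Set γ}
    (hs : MeasurableSet s) :
    μ.bind (fun x => ν.map (F x)) s = ∫⁻ y, μ {x | F x y ∈ s} ∂ν := by
  rw [bind_map_eq_map_prod hF, Measure.map_apply hF hs, Measure.prod_apply_symm (hF hs)]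
  rfl

end MeasureTheory.Measure

noncomputable def arcsineMeasure : Measure ℝ :=
  (volume.restrict (Ioo 0 1)).withDensity
    fun u => ENNReal.ofReal (2 / π * (1 - u ^ 2) ^ (-(1/2) : ℝ))

instance : SFinite arcsineMeasure := by
  unfold arcsineMeasure
  infer_instance

theorem map_const_mul_volume_restrict_Ioo {c : ℝ} (hc : 0 < c) :
    (volume.restrict (Ioo 0 1)).map (c * ·) =
      ENNReal.ofReal c⁻¹ • volume.restrict (Ioo 0 c) := by
  have hpre : Ioo (0 : ℝ) 1 = (c * ·) ⁻¹' Ioo 0 c := by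
    rw [preimage_const_mul_Ioo₀ _ _ hc, zero_div, div_self hc.ne']
  rw [hpre, ← Measure.restrict_map (measurable_const_mul c) measurableSet_Ioo,
    Real.map_volume_mul_left hc.ne', Measure.restrict_smul, abs_of_pos (inv_pos.mpr hc)]

theorem arcsine_density_eq_mul_scaled {c u : ℝ} (hc : 0 < c) (hu : u ∈ Ioo (0 : ℝ) 1) :
    ENNReal.ofReal (2 / π * (1 - u ^ 2) ^ (-(1/2) : ℝ)) =
      ENNReal.ofReal c * ENNReal.ofReal (2 / π * (c ^ 2 - (c * u) ^ 2) ^ (-(1/2) : ℝ)) := by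
  have hu2 : 0 ≤ 1 - u ^ 2 := by nlinarith [hu.1, hu.2]
  have hc2 : (c ^ 2) ^ (-(1/2) : ℝ) = c⁻¹ := by
    rw [← Real.rpow_natCast, ← Real.rpow_mul hc.le]
    norm_num [Real.rpow_neg_one]
  rw [← ENNReal.ofReal_mul hc.le, show c ^ 2 - (c * u) ^ 2 = c ^ 2 * (1 - u ^ 2) by ring,
    Real.mul_rpow (by positivity) hu2, hc2]
  field_simp

theorem map_const_mul_arcsineMeasure {c : ℝ} (hc : 0 < c) :
    arcsineMeasure.map (c * ·) = (volume.restrict (Ioo 0 c)).withDensity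
      fun r => ENNReal.ofReal (2 / π * (c ^ 2 - r ^ 2) ^ (-(1/2) : ℝ)) := by
  set ρ : ℝ → ℝ≥0∞ := fun r => ENNReal.ofReal (2 / π * (c ^ 2 - r ^ 2) ^ (-(1/2) : ℝ))
  have hρ : Measurable ρ := by fun_prop
  have hdensity : (fun u : ℝ => ENNReal.ofReal (2 / π * (1 - u ^ 2) ^ (-(1/2) : ℝ)))
      =ᵐ[volume.restrict (Ioo 0 1)] ENNReal.ofReal c • (ρ ∘ (c * ·)) := by
    filter_upwards [ae_restrict_mem measurableSet_Ioo] with u hu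
    exact arcsine_density_eq_mul_scaled hc hu
  rw [arcsineMeasure, withDensity_congr_ae hdensity, withDensity_smul' _ _ ENNReal.ofReal_ne_top,
    Measure.map_smul, Measure.map_withDensity_comp (measurable_const_mul c) _ hρ,
    map_const_mul_volume_restrict_Ioo hc, withDensity_smul_measure, smul_smul,
    ← ENNReal.ofReal_mul hc.le, mul_inv_cancel₀ hc.ne', ENNReal.ofReal_one, one_smul]

theorem arcsineT_kernel_eq_map_smul {E : Type*} [NormedAddCommGroup E] [NormedSpace ℝ E]
    [MeasurableSpace E] [BorelSpace E] (k : ℝ) {x : E} (hx : x ≠ 0) :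
    ((volume.restrict (Ioo (0 : ℝ) (‖x‖ ^ (k / 2)))).withDensity
        fun r => ENNReal.ofReal (2 / π * (‖x‖ ^ k - r ^ 2) ^ (-(1/2) : ℝ))).map
        (fun r : ℝ => (r / ‖x‖) • x) =
      arcsineMeasure.map fun u => u • ‖x‖ ^ (k / 2 - 1) • x := by
  have hx0 : 0 < ‖x‖ := norm_pos_iff.mpr hx
  have hc : 0 < ‖x‖ ^ (k / 2) := Real.rpow_pos_of_pos hx0 _
  have hc2 : (‖x‖ ^ (k / 2)) ^ 2 = ‖x‖ ^ k := by
    rw [← Real.rpow_natCast, ← Real.rpow_mul hx0.le]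
    norm_num
  rw [← hc2, ← map_const_mul_arcsineMeasure hc,
    Measure.map_map (by fun_prop) (measurable_const_mul _)]
  congr 1
  funext u
  rw [Function.comp_apply, smul_smul, Real.rpow_sub hx0, Real.rpow_one]
  ring_nf

theorem arcsineT_eq_bind (k : ℝ) (ν : Measure (EuclideanSpace ℝ (Fin d))) :
    arcsineT k ν = (ν.restrict {0}ᶜ).bind
      fun x => arcsineMeasure.map fun u => u • ‖x‖ ^ (k / 2 - 1) • x := by
  refine Measure.bind_congr_right ?_
  filter_upwards [ae_restrict_mem (measurableSet_singleton 0).compl] with x hx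
  exact arcsineT_kernel_eq_map_smul k hx

theorem sFinite_restrict_compl_zero {E : Type*} [NormedAddCommGroup E] [MeasurableSpace E]
    [OpensMeasurableSpace E] {k : ℝ} {ν : Measure E}
    (hL : ∫⁻ x, ENNReal.ofReal (min 1 (‖x‖ ^ k)) ∂ν < ⊤) : SFinite (ν.restrict {0}ᶜ) := by
  refine Measure.sFinite_of_lintegral_ne_top (f := fun x => ENNReal.ofReal (min 1 (‖x‖ ^ k)))
    (by fun_prop) ?_ (ne_top_of_le_ne_top hL.ne (lintegral_mono' Measure.restrict_le_self le_rfl))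
  filter_upwards [ae_restrict_mem (measurableSet_singleton 0).compl] with x hx
  exact (ENNReal.ofReal_pos.mpr (lt_min one_pos
    (Real.rpow_pos_of_pos (norm_pos_iff.mpr hx) k))).ne'

theorem arcsineT_as_upsilon_general (k : ℝ)
    (ν : Measure (EuclideanSpace ℝ (Fin d)))
    (hL : ∫⁻ x, ENNReal.ofReal (min 1 (‖x‖ ^ k)) ∂ν < ⊤) :
    ∀ B : Set (EuclideanSpace ℝ (Fin d)), MeasurableSet B →
      arcsineT k ν B =
        ∫⁻ u in Set.Ioo (0 : ℝ) 1,
          pTrans (k / 2) ν {x | u • x ∈ B} *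
            ENNReal.ofReal (2 / Real.pi * (1 - u ^ 2) ^ (-(1/2) : ℝ)) := by
  intro B hB
  have := sFinite_restrict_compl_zero hL
  rw [arcsineT_eq_bind, Measure.bind_map_apply (by fun_prop) hB, arcsineMeasure,
    lintegral_withDensity_eq_lintegral_mul_non_measurable _ (by fun_prop)
      (ae_of_all _ fun _ => ENNReal.ofReal_lt_top)]
  refine lintegral_congr fun u => ?_
  have hBu : MeasurableSet {y : EuclideanSpace ℝ (Fin d) | u • y ∈ B} :=
    measurable_const_smul u hB
  rw [Pi.mul_apply, mul_comm, pTrans, Measure.map_apply (by fun_prop) hBu]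
  rfl

/-- `𝒜ₖ(ν)(B) = ∫₀¹ ν^{(k/2)}(u⁻¹ B) (2/π)(1-u²)^{-1/2} du`; in particular `𝒜₂` is an
Upsilon transformation with dilation measure `(2/π)(1-u²)^{-1/2} 1_{(0,1)}(u) du`. -/
theorem arcsineT_as_upsilon (k : ℝ) (hk : k = 1 ∨ k = 2)
    (ν : Measure (EuclideanSpace ℝ (Fin d))) (hν : ν {0} = 0)
    (hL : ∫⁻ x, ENNReal.ofReal (min 1 (‖x‖ ^ k)) ∂ν < ⊤) :
    ∀ B : Set (EuclideanSpace ℝ (Fin d)), MeasurableSet B →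
      arcsineT k ν B =
        ∫⁻ u in Set.Ioo (0 : ℝ) 1,
          pTrans (k / 2) ν {x | u • x ∈ B} *
            ENNReal.ofReal (2 / Real.pi * (1 - u ^ 2) ^ (-(1/2) : ℝ)) :=
  arcsineT_as_upsilon_general k ν hL
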